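/- Let T be a right caterpillar with c vertices and recursive depth i, and let G be an edge-ordered bigraph. If G^{c-left}_i contains at least one edge, then G contains T. -/
import Mathlib


set_option maxHeartbeats 1000000

/-- An edge-ordered graph: a finite simple graph together with an injective
real labeling of its edges (inducing a linear order on the edge set). -/
structure EOGraph (V : Type) [Fintype V] where
  graph : SimpleGraph V
  label : Sym2 V → ℝ
  inj : ∀ e ∈ graph.edgeSet, ∀ f ∈ graph.edgeSet, label e = label f → e = f

/-- `G` contains `H`: an injective, adjacency-preserving, edge-order-respecting map. -/
def EOContains {V W : Type} [Fintype V] [Fintype W] (G : EOGraph V) (H : EOGraph W) : Prop :=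
  ∃ f : W → V, Function.Injective f ∧
    (∀ a b, H.graph.Adj a b → G.graph.Adj (f a) (f b)) ∧
    ∀ e ∈ H.graph.edgeSet, ∀ e' ∈ H.graph.edgeSet,
      H.label e < H.label e' → G.label (Sym2.map f e) < G.label (Sym2.map f e')

/-- The Turán number `ex_<(n, H)`: the maximum number of edges of an
edge-ordered graph on `n` vertices avoiding `H`. -/
noncomputable def exLT {W : Type} [Fintype W] (n : ℕ) (H : EOGraph W) : ℕ :=
  sSup {m | ∃ G : EOGraph (Fin n), ¬ EOContains G H ∧ G.graph.edgeSet.ncard = m}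

/-- The reverse of an edge-ordered graph: same graph, reversed edge order. -/
def EOGraph.reverse {V : Type} [Fintype V] (G : EOGraph V) : EOGraph V where
  graph := G.graph
  label := fun e => - G.label e
  inj := fun e he f hf h => G.inj e he f hf (neg_inj.mp h)

/-- Two edges (as elements of `Sym2 V`) are adjacent if they share a vertex. -/
def EdgesAdjacent {V : Type} (e f : Sym2 V) : Prop := ∃ v, v ∈ e ∧ v ∈ f

/-- `e` and `f` are consecutive edges of `G`: `e < f` with no edge strictly in between. -/
def Consecutive {V : Type} [Fintype V] (G : EOGraph V) (e f : Sym2 V) : Prop :=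
  e ∈ G.graph.edgeSet ∧ f ∈ G.graph.edgeSet ∧ G.label e < G.label f ∧
    ¬ ∃ g ∈ G.graph.edgeSet, G.label e < G.label g ∧ G.label g < G.label f

/-- A semi-caterpillar: the underlying graph is a tree with at least one edge, and any
pair of consecutive edges is adjacent or directly connected by an edge larger than both. -/
def IsSemiCaterpillar {V : Type} [Fintype V] (G : EOGraph V) : Prop :=
  G.graph.IsTree ∧ G.graph.edgeSet.Nonempty ∧
  ∀ e f, Consecutive G e f →
    EdgesAdjacent e f ∨
    ∃ u v, s(u, v) ∈ G.graph.edgeSet ∧ u ∈ e ∧ v ∈ f ∧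
      G.label e < G.label s(u, v) ∧ G.label f < G.label s(u, v)

/-- The order chromatic number of `G` is at most `k`: there is a simple graph `H` with
chromatic number at most `k` all of whose edge-orderings contain `G`. -/
def OrderChromAtMost {V : Type} [Fintype V] (G : EOGraph V) (k : ℕ) : Prop :=
  ∃ (m : ℕ) (H : SimpleGraph (Fin m)), H.chromaticNumber ≤ (k : ℕ∞) ∧
    ∀ K : EOGraph (Fin m), K.graph = H → EOContains K G

/-- The order chromatic number of `G` equals 2. -/
def HasOrderChrom2 {V : Type} [Fintype V] (G : EOGraph V) : Prop :=
  OrderChromAtMost G 2 ∧ ¬ OrderChromAtMost G 1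

/-- A vertex is close if the edges incident to it form an interval in the edge order. -/
def CloseVertex {V : Type} [Fintype V] (G : EOGraph V) (v : V) : Prop :=
  ∀ e ∈ G.graph.edgeSet, ∀ f ∈ G.graph.edgeSet, ∀ g ∈ G.graph.edgeSet,
    v ∈ e → v ∈ g → G.label e ≤ G.label f → G.label f ≤ G.label g → v ∈ f

/-- An edge-ordered bigraph: an edge-ordered graph with a proper 2-coloring of the
vertices into left (`false`) and right (`true`) vertices. -/
structure EOBigraph (V : Type) [Fintype V] where
  toEOGraph : EOGraph V
  side : V → Bool
  proper : ∀ u v, toEOGraph.graph.Adj u v → side u ≠ side v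

/-- A right caterpillar: an edge-ordered bigraph whose underlying edge-ordered graph is a
semi-caterpillar and all of whose right vertices are close. -/
def IsRightCaterpillar {V : Type} [Fintype V] (B : EOBigraph V) : Prop :=
  IsSemiCaterpillar B.toEOGraph ∧ ∀ v, B.side v = true → CloseVertex B.toEOGraph v

/-- Containment of edge-ordered bigraphs: additionally sides must be preserved. -/
def BContains {V W : Type} [Fintype V] [Fintype W] (G : EOBigraph V) (H : EOBigraph W) : Prop :=
  ∃ f : W → V, Function.Injective f ∧
    (∀ a b, H.toEOGraph.graph.Adj a b → G.toEOGraph.graph.Adj (f a) (f b)) ∧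
    (∀ e ∈ H.toEOGraph.graph.edgeSet, ∀ e' ∈ H.toEOGraph.graph.edgeSet,
      H.toEOGraph.label e < H.toEOGraph.label e' →
        G.toEOGraph.label (Sym2.map f e) < G.toEOGraph.label (Sym2.map f e')) ∧
    ∀ a, G.side (f a) = H.side a

/-- Isomorphism of edge-ordered bigraphs. -/
def BIsoTo {V W : Type} [Fintype W] [Fintype V] (H : EOBigraph W) (G : EOBigraph V) : Prop :=
  ∃ f : W ≃ V, (∀ a b, H.toEOGraph.graph.Adj a b ↔ G.toEOGraph.graph.Adj (f a) (f b)) ∧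
    (∀ e ∈ H.toEOGraph.graph.edgeSet, ∀ e' ∈ H.toEOGraph.graph.edgeSet,
      (H.toEOGraph.label e < H.toEOGraph.label e' ↔
        G.toEOGraph.label (Sym2.map f e) < G.toEOGraph.label (Sym2.map f e'))) ∧
    ∀ a, G.side (f a) = H.side a

/-- Isomorphism of edge-ordered graphs. -/
def EOIsoTo {V W : Type} [Fintype W] [Fintype V] (H : EOGraph W) (G : EOGraph V) : Prop :=
  ∃ f : W ≃ V, (∀ a b, H.graph.Adj a b ↔ G.graph.Adj (f a) (f b)) ∧
    ∀ e ∈ H.graph.edgeSet, ∀ e' ∈ H.graph.edgeSet,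
      (H.label e < H.label e' ↔ G.label (Sym2.map f e) < G.label (Sym2.map f e'))

/-- The labeling of the path graph on `Fin k` in which the edge `{i, i+1}` gets label `w i`. -/
def pathLabel {k : ℕ} (w : Fin k → ℝ) : Sym2 (Fin k) → ℝ :=
  Sym2.lift ⟨fun i j => w (min i j), fun i j => by simp [min_comm]⟩

lemma pathGraph_edge_form {k : ℕ} {e : Sym2 (Fin k)}
    (he : e ∈ (SimpleGraph.pathGraph k).edgeSet) :
    ∃ i j : Fin k, e = s(i, j) ∧ (i : ℕ) + 1 = (j : ℕ) := by
  induction e using Sym2.inductionOn with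
  | hf a b =>
    rw [SimpleGraph.mem_edgeSet, SimpleGraph.pathGraph_adj] at he
    rcases he with h | h
    · exact ⟨a, b, rfl, h⟩
    · exact ⟨b, a, Sym2.eq_swap, h⟩

/-- The edge-ordered path on `k` vertices whose edge labels, listed along the path,
are `w 0, w 1, …, w (k-2)`. -/
def pathEO (k : ℕ) (w : Fin k → ℝ) (hw : Function.Injective w) : EOGraph (Fin k) where
  graph := SimpleGraph.pathGraph k
  label := pathLabel w
  inj := by
    intro e he f hf hef
    obtain ⟨i, j, rfl, hij⟩ := pathGraph_edge_form he
    obtain ⟨i', j', rfl, hij'⟩ := pathGraph_edge_form hf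
    have h1 : min i j = i := min_eq_left (Fin.le_def.mpr (by omega))
    have h2 : min i' j' = i' := min_eq_left (Fin.le_def.mpr (by omega))
    simp only [pathLabel, Sym2.lift_mk] at hef
    rw [h1, h2] at hef
    have hii : i = i' := hw hef
    have hjj : j = j' := Fin.ext (by omega)
    rw [hii, hjj]

/-- The edge-ordered path with natural-number labels. -/
def pathEON (k : ℕ) (v : Fin k → ℕ) (hv : Function.Injective v) : EOGraph (Fin k) :=
  pathEO k (fun i => (v i : ℝ)) (fun a b h => hv (Nat.cast_injective h))

/-- The bipartition of the edge-ordered path `pathEON k v hv`; the starting vertex is a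
right vertex iff `startRight` holds (right = `true`, left = `false`). -/
def pathEOBig (k : ℕ) (v : Fin k → ℕ) (hv : Function.Injective v) (startRight : Bool) :
    EOBigraph (Fin k) where
  toEOGraph := pathEON k v hv
  side := fun i => if i.val % 2 = 0 then startRight else !startRight
  proper := by
    intro a b hab
    have h : (SimpleGraph.pathGraph k).Adj a b := hab
    rw [SimpleGraph.pathGraph_adj] at h
    have hpar : (a.val % 2 = 0) ↔ ¬ (b.val % 2 = 0) := by omega
    by_cases ha : a.val % 2 = 0 <;> by_cases hb : b.val % 2 = 0 <;>
      simp_all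

def P4_213 : EOGraph (Fin 4) := pathEON 4 ![2,1,3,0] (by decide)
def P5_1342 : EOGraph (Fin 5) := pathEON 5 ![1,3,4,2,0] (by decide)
def P5_1432 : EOGraph (Fin 5) := pathEON 5 ![1,4,3,2,0] (by decide)
def P6_13254 : EOGraph (Fin 6) := pathEON 6 ![1,3,2,5,4,0] (by decide)
def P6_21354 : EOGraph (Fin 6) := pathEON 6 ![2,1,3,5,4,0] (by decide)
def P6plus_13254 : EOBigraph (Fin 6) := pathEOBig 6 ![1,3,2,5,4,0] (by decide) true
def P6minus_13254 : EOBigraph (Fin 6) := pathEOBig 6 ![1,3,2,5,4,0] (by decide) false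
def P5plus_2143 : EOBigraph (Fin 5) := pathEOBig 5 ![2,1,4,3,0] (by decide) true
def P5minus_2143 : EOBigraph (Fin 5) := pathEOBig 5 ![2,1,4,3,0] (by decide) false

/-- `B'` is an extension of `B`: it is obtained by adding new edges, each connecting an end
of the smallest edge `s(x,y)` of `B` to a new degree-1 vertex, all new edges being smaller
than `s(x,y)`, and all new edges at the left end being smaller than those at the right end. -/
def IsExtensionOf {V' V : Type} [Fintype V'] [Fintype V]
    (B' : EOBigraph V') (B : EOBigraph V) : Prop :=
  ∃ (ι : V → V') (x y : V),
    Function.Injective ι ∧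
    B.toEOGraph.graph.Adj x y ∧ B.side x = false ∧ B.side y = true ∧
    (∀ e ∈ B.toEOGraph.graph.edgeSet, B.toEOGraph.label s(x, y) ≤ B.toEOGraph.label e) ∧
    (∀ a b, B.toEOGraph.graph.Adj a b ↔ B'.toEOGraph.graph.Adj (ι a) (ι b)) ∧
    (∀ a, B'.side (ι a) = B.side a) ∧
    (∀ e ∈ B.toEOGraph.graph.edgeSet, ∀ f ∈ B.toEOGraph.graph.edgeSet,
      (B.toEOGraph.label e < B.toEOGraph.label f ↔
        B'.toEOGraph.label (Sym2.map ι e) < B'.toEOGraph.label (Sym2.map ι f))) ∧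
    (∀ w : V', w ∉ Set.range ι →
      (∃! u, B'.toEOGraph.graph.Adj w u) ∧
      (∀ u, B'.toEOGraph.graph.Adj w u → (u = ι x ∨ u = ι y) ∧
        B'.toEOGraph.label s(w, u) < B'.toEOGraph.label s(ι x, ι y))) ∧
    (∀ w w' : V', w ∉ Set.range ι → w' ∉ Set.range ι →
      B'.toEOGraph.graph.Adj w (ι x) → B'.toEOGraph.graph.Adj w' (ι y) →
      B'.toEOGraph.label s(w, ι x) < B'.toEOGraph.label s(w', ι y))

/-- A bundled edge-ordered bigraph (on some `Fin n`). -/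
structure BundledBigraph where
  n : ℕ
  big : EOBigraph (Fin n)

/-- `B` is (isomorphic to) `T₀`, the edge-ordered bigraph with one edge and two vertices. -/
def IsT0 {V : Type} [Fintype V] (B : EOBigraph V) : Prop :=
  Fintype.card V = 2 ∧ ∀ u v : V, u ≠ v → B.toEOGraph.graph.Adj u v

/-- `B` can be obtained (up to isomorphism) from `T₀` by a sequence of `i` extensions. -/
def ReachedInSteps {V : Type} [Fintype V] (i : ℕ) (B : EOBigraph V) : Prop :=
  ∃ f : ℕ → BundledBigraph, IsT0 (f 0).big ∧ BIsoTo (f i).big B ∧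
    ∀ j < i, IsExtensionOf (f (j+1)).big (f j).big

/-- The recursive depth of a right caterpillar: the minimum number of extension steps
needed to obtain it from `T₀`. -/
def HasRecursiveDepth {V : Type} [Fintype V] (B : EOBigraph V) (i : ℕ) : Prop :=
  ReachedInSteps i B ∧ ∀ j < i, ¬ ReachedInSteps j B

/-- An edge `e` (with left end `x` and right end `y`) is `c`-left-leaning: there are `c` edges
at `x` and `c` edges at `y` with every edge of the latter set larger than every edge of the
former, but smaller than `e`. -/
def LeftLeaning {V : Type} [Fintype V] (c : ℕ) (G : EOBigraph V) (e : Sym2 V) : Prop :=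
  ∃ x y : V, e = s(x, y) ∧ e ∈ G.toEOGraph.graph.edgeSet ∧
    G.side x = false ∧ G.side y = true ∧
    ∃ S S' : Finset (Sym2 V), S.card = c ∧ S'.card = c ∧
      (∀ f ∈ S, f ∈ G.toEOGraph.graph.edgeSet ∧ x ∈ f) ∧
      (∀ f ∈ S', f ∈ G.toEOGraph.graph.edgeSet ∧ y ∈ f) ∧
      (∀ f ∈ S, ∀ f' ∈ S', G.toEOGraph.label f < G.toEOGraph.label f') ∧
      (∀ f' ∈ S', G.toEOGraph.label f' < G.toEOGraph.label e)

/-- An edge `e` (with left end `x` and right end `y`) is `c`-right-leaning. -/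
def RightLeaning {V : Type} [Fintype V] (c : ℕ) (G : EOBigraph V) (e : Sym2 V) : Prop :=
  ∃ x y : V, e = s(x, y) ∧ e ∈ G.toEOGraph.graph.edgeSet ∧
    G.side x = false ∧ G.side y = true ∧
    ∃ S S' : Finset (Sym2 V), S.card = c ∧ S'.card = c ∧
      (∀ f ∈ S, f ∈ G.toEOGraph.graph.edgeSet ∧ x ∈ f) ∧
      (∀ f ∈ S', f ∈ G.toEOGraph.graph.edgeSet ∧ y ∈ f) ∧
      (∀ f' ∈ S', ∀ f ∈ S, G.toEOGraph.label f' < G.toEOGraph.label f) ∧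
      (∀ f ∈ S, G.toEOGraph.label f < G.toEOGraph.label e)

/-- The spanning sub-bigraph of `G` consisting of the edges satisfying `P`. -/
def bigraphRestrict {V : Type} [Fintype V] (G : EOBigraph V) (P : Sym2 V → Prop) :
    EOBigraph V where
  toEOGraph :=
    { graph := SimpleGraph.fromEdgeSet {e | e ∈ G.toEOGraph.graph.edgeSet ∧ P e}
      label := G.toEOGraph.label
      inj := by
        intro e he f hf h
        rw [SimpleGraph.edgeSet_fromEdgeSet] at he hf
        exact G.toEOGraph.inj e he.1.1 f hf.1.1 h }
  side := G.side
  proper := by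
    intro u v huv
    rw [SimpleGraph.fromEdgeSet_adj] at huv
    have h1 : s(u, v) ∈ G.toEOGraph.graph.edgeSet := huv.1.1
    exact G.proper u v ((SimpleGraph.mem_edgeSet _).mp h1)

/-- The spanning subgraph of the `c`-left-leaning edges. -/
def leftSub {V : Type} [Fintype V] (c : ℕ) (G : EOBigraph V) : EOBigraph V :=
  bigraphRestrict G (LeftLeaning c G)

/-- The spanning subgraph of the `c`-right-leaning edges. -/
def rightSub {V : Type} [Fintype V] (c : ℕ) (G : EOBigraph V) : EOBigraph V :=
  bigraphRestrict G (RightLeaning c G)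

/-- `G^{c-left}_i`: iteratively keep only `c`-left-leaning edges, `i` times. -/
def leftIter {V : Type} [Fintype V] (c i : ℕ) (G : EOBigraph V) : EOBigraph V :=
  (leftSub c)^[i] G

/-- `G^{c-right}_i`: iteratively keep only `c`-right-leaning edges, `i` times. -/
def rightIter {V : Type} [Fintype V] (c i : ℕ) (G : EOBigraph V) : EOBigraph V :=
  (rightSub c)^[i] G

/-- The set of labels of edges incident to `v`. -/
def incidentLabels {V : Type} [Fintype V] (G : EOGraph V) (v : V) : Set ℝ :=
  G.label '' {e | e ∈ G.graph.edgeSet ∧ v ∈ e}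

/-- The vertex label `l(v)`: the second smallest label among the edges incident to `v`
(meaningful when `v` has degree at least 2). -/
noncomputable def secondLabel {V : Type} [Fintype V] (G : EOGraph V) (v : V) : ℝ :=
  sInf (incidentLabels G v \ {sInf (incidentLabels G v)})

/-- `v` has degree at least 2. -/
def DegTwo {V : Type} [Fintype V] (G : EOGraph V) (v : V) : Prop :=
  2 ≤ {e | e ∈ G.graph.edgeSet ∧ v ∈ e}.ncard

/-- An edge `xy` (left end `x`, right end `y`) is left inclined if `l(x) < l(y) ≤ L(xy)`. -/
def LeftInclined {V : Type} [Fintype V] (G : EOBigraph V) (e : Sym2 V) : Prop :=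
  ∃ x y : V, e = s(x, y) ∧ e ∈ G.toEOGraph.graph.edgeSet ∧
    G.side x = false ∧ G.side y = true ∧
    DegTwo G.toEOGraph x ∧ DegTwo G.toEOGraph y ∧
    secondLabel G.toEOGraph x < secondLabel G.toEOGraph y ∧
    secondLabel G.toEOGraph y ≤ G.toEOGraph.label e

/-- An edge `xy` (left end `x`, right end `y`) is right inclined if `l(y) < l(x) ≤ L(xy)`. -/
def RightInclined {V : Type} [Fintype V] (G : EOBigraph V) (e : Sym2 V) : Prop :=
  ∃ x y : V, e = s(x, y) ∧ e ∈ G.toEOGraph.graph.edgeSet ∧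
    G.side x = false ∧ G.side y = true ∧
    DegTwo G.toEOGraph x ∧ DegTwo G.toEOGraph y ∧
    secondLabel G.toEOGraph y < secondLabel G.toEOGraph x ∧
    secondLabel G.toEOGraph x ≤ G.toEOGraph.label e

/-- `G_l`: the spanning sub-bigraph of the left inclined edges of `G`. -/
def inclinedLeftSub {V : Type} [Fintype V] (G : EOBigraph V) : EOBigraph V :=
  bigraphRestrict G (LeftInclined G)

/-- `G_r`: the spanning sub-bigraph of the right inclined edges of `G`. -/
def inclinedRightSub {V : Type} [Fintype V] (G : EOBigraph V) : EOBigraph V :=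
  bigraphRestrict G (RightInclined G)

/-- The underlying simple graph of `P` is a path. -/
def IsPathEO {V : Type} [Fintype V] (P : EOGraph V) : Prop :=
  ∃ (k : ℕ) (f : V ≃ Fin k), ∀ a b, P.graph.Adj a b ↔ (SimpleGraph.pathGraph k).Adj (f a) (f b)

/-- A monotone path: the labels increase (or decrease) monotonically along the path. -/
def IsMonotonePath {V : Type} [Fintype V] (P : EOGraph V) : Prop :=
  ∃ (k : ℕ) (w : Fin k → ℝ) (hw : Function.Injective w),
    (StrictMono w ∨ StrictAnti w) ∧ EOIsoTo (pathEO k w hw) P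

/-- A flipped path: obtained from a monotone path (with at least 3 edges) by swapping
either the two smallest or the two largest labels. -/
def IsFlippedPath {V : Type} [Fintype V] (P : EOGraph V) : Prop :=
  ∃ (k : ℕ) (hk : 4 ≤ k) (w : Fin k → ℝ) (hw : StrictMono w),
    EOIsoTo (pathEO k (w ∘ (Equiv.swap (⟨0, by omega⟩ : Fin k) ⟨1, by omega⟩))
      (hw.injective.comp (Equiv.injective _))) P ∨
    EOIsoTo (pathEO k (w ∘ (Equiv.swap (⟨k-3, by omega⟩ : Fin k) ⟨k-2, by omega⟩))
      (hw.injective.comp (Equiv.injective _))) P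

/-- 0-1 matrix containment: `A` contains `B` if `B` can be obtained from a submatrix of `A`
by possibly changing some 1 entries to 0. -/
def MContains {m n p q : ℕ} (A : Fin m → Fin n → Bool) (B : Fin p → Fin q → Bool) : Prop :=
  ∃ (r : Fin p → Fin m) (c : Fin q → Fin n), StrictMono r ∧ StrictMono c ∧
    ∀ i j, B i j = true → A (r i) (c j) = true

/-- The extremal function of a 0-1 matrix `B`: the maximum number of 1 entries in an
`n × n` 0-1 matrix avoiding `B`. -/
noncomputable def mex {p q : ℕ} (n : ℕ) (B : Fin p → Fin q → Bool) : ℕ :=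
  sSup {k | ∃ A : Fin n → Fin n → Bool, ¬ MContains A B ∧
    k = (Finset.univ.filter fun ij : Fin n × Fin n => A ij.1 ij.2 = true).card}

/-- The staircase with positions `p 0, …, p t` describes the matrix `A`. -/
def DescribedBy {nr nc : ℕ} (A : Fin nr → Fin nc → Bool) (t : ℕ)
    (p : Fin (t + 1) → Fin nr × Fin nc) : Prop :=
  (∀ k : Fin t,
      ((p k.succ).1.val = (p k.castSucc).1.val + 1 ∧ (p k.succ).2 = (p k.castSucc).2) ∨
      ((p k.succ).1 = (p k.castSucc).1 ∧ (p k.succ).2.val = (p k.castSucc).2.val + 1)) ∧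
  ∀ i j, A i j = true ↔
    ((∃ k, p k = (i, j)) ∨
     (i = (p 0).1 ∧ j < (p 0).2) ∨ (j = (p 0).2 ∧ i < (p 0).1) ∨
     (i = (p (Fin.last t)).1 ∧ (p (Fin.last t)).2 < j) ∨
     (j = (p (Fin.last t)).2 ∧ (p (Fin.last t)).1 < i))

/-- A staircase matrix: `A`, or `A` with the order of its columns reversed, is described
by a staircase. -/
def IsStaircaseMatrix {nr nc : ℕ} (A : Fin nr → Fin nc → Bool) : Prop :=
  (∃ t p, DescribedBy A t p) ∨ (∃ t p, DescribedBy (fun i j => A i j.rev) t p)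

/-- The bipartite graph whose bipartite adjacency matrix is `A`. -/
def MatrixGraph {nr nc : ℕ} (A : Fin nr → Fin nc → Bool) : SimpleGraph (Fin nr ⊕ Fin nc) :=
  SimpleGraph.fromRel fun u v =>
    match u, v with
    | .inl i, .inr j => A i j = true
    | _, _ => False

/-- A connected 0-1 matrix: the bipartite adjacency matrix of a connected graph. -/
def IsConnectedMatrix {nr nc : ℕ} (A : Fin nr → Fin nc → Bool) : Prop :=
  (MatrixGraph A).Connected

section Stmt6Helpers

lemma leftIter_succ' {V : Type} [Fintype V] (c i : ℕ) (G : EOBigraph V) :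
    leftIter c (i + 1) G = leftSub c (leftIter c i G) :=
  Function.iterate_succ_apply' _ _ _

lemma leftIter_label {V : Type} [Fintype V] (c i : ℕ) (G : EOBigraph V) :
    (leftIter c i G).toEOGraph.label = G.toEOGraph.label := by
  induction i with
  | zero => rfl
  | succ n ih => rw [leftIter_succ']; exact ih

lemma leftIter_side {V : Type} [Fintype V] (c i : ℕ) (G : EOBigraph V) :
    (leftIter c i G).side = G.side := by
  induction i with
  | zero => rfl
  | succ n ih => rw [leftIter_succ']; exact ih

lemma leftSub_edge {V : Type} [Fintype V] {c : ℕ} {G : EOBigraph V} {e : Sym2 V}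
    (h : e ∈ (leftSub c G).toEOGraph.graph.edgeSet) :
    e ∈ G.toEOGraph.graph.edgeSet ∧ LeftLeaning c G e := by
  have h2 := h
  rw [show (leftSub c G).toEOGraph.graph = SimpleGraph.fromEdgeSet
      {e | e ∈ G.toEOGraph.graph.edgeSet ∧ LeftLeaning c G e} from rfl,
    SimpleGraph.edgeSet_fromEdgeSet] at h2
  exact h2.1

lemma leftIter_subset {V : Type} [Fintype V] (c i : ℕ) (G : EOBigraph V) :
    (leftIter c (i + 1) G).toEOGraph.graph.edgeSet ⊆
      (leftIter c i G).toEOGraph.graph.edgeSet := by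
  intro e he
  rw [leftIter_succ'] at he
  exact (leftSub_edge he).1

lemma leftIter_subset_base {V : Type} [Fintype V] (c : ℕ) (G : EOBigraph V) :
    ∀ i, (leftIter c i G).toEOGraph.graph.edgeSet ⊆ G.toEOGraph.graph.edgeSet := by
  intro i
  induction i with
  | zero => exact fun e he => he
  | succ n ih => exact fun e he => ih (leftIter_subset c n G he)

/-- A monotone injective matching of a finset `L` into a finset `A`, monotone with
respect to real-valued keys `κ` and `μ`. -/
lemma exists_mono_matching {α β : Type*} [DecidableEq α] [DecidableEq β] [Nonempty β]
    (κ : α → ℝ) (μ : β → ℝ) :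
    ∀ (L : Finset α) (A : Finset β), Set.InjOn μ ↑A → L.card ≤ A.card →
    ∃ φ : α → β, (∀ w ∈ L, φ w ∈ A) ∧ Set.InjOn φ ↑L ∧
      (∀ w ∈ L, ∀ w' ∈ L, κ w < κ w' → μ (φ w) < μ (φ w')) := by
  intro L
  induction L using Finset.strongInduction with
  | _ L ihL =>
    intro A hμ hcard
    rcases L.eq_empty_or_nonempty with rfl | hL
    · exact ⟨fun _ => Classical.arbitrary β, by simp, by simp, by simp⟩
    · obtain ⟨w0, hw0L, hw0min⟩ := L.exists_min_image κ hL
      have hA : A.Nonempty := Finset.card_pos.mp (lt_of_lt_of_le (Finset.card_pos.mpr hL) hcard)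
      obtain ⟨f0, hf0A, hf0min⟩ := A.exists_min_image μ hA
      obtain ⟨φ', hφ'A, hφ'inj, hφ'mono⟩ := ihL (L.erase w0) (Finset.erase_ssubset hw0L)
        (A.erase f0) (hμ.mono (by exact_mod_cast Finset.erase_subset _ _))
        (by rw [Finset.card_erase_of_mem hw0L, Finset.card_erase_of_mem hf0A]; omega)
      refine ⟨Function.update φ' w0 f0, ?_, ?_, ?_⟩
      · intro w hw
        by_cases hww : w = w0
        · subst hww; rw [Function.update_self]; exact hf0A
        · rw [Function.update_of_ne hww]
          exact Finset.mem_of_mem_erase (hφ'A w (Finset.mem_erase.mpr ⟨hww, hw⟩))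
      · intro w hw w' hw' heq
        by_cases hww : w = w0 <;> by_cases hww' : w' = w0
        · rw [hww, hww']
        · exfalso; subst hww
          rw [Function.update_self, Function.update_of_ne hww'] at heq
          have h1 := hφ'A w' (Finset.mem_erase.mpr ⟨hww', hw'⟩)
          exact (Finset.mem_erase.mp h1).1 heq.symm
        · exfalso; subst hww'
          rw [Function.update_self, Function.update_of_ne hww] at heq
          have h1 := hφ'A w (Finset.mem_erase.mpr ⟨hww, hw⟩)
          exact (Finset.mem_erase.mp h1).1 heq
        · rw [Function.update_of_ne hww, Function.update_of_ne hww'] at heq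
          exact hφ'inj (by exact_mod_cast Finset.mem_erase.mpr ⟨hww, hw⟩)
            (by exact_mod_cast Finset.mem_erase.mpr ⟨hww', hw'⟩) heq
      · intro w hw w' hw' hlt
        by_cases hww : w = w0 <;> by_cases hww' : w' = w0
        · exfalso; rw [hww, hww'] at hlt; exact lt_irrefl _ hlt
        · subst hww
          rw [Function.update_self, Function.update_of_ne hww']
          have hmem := hφ'A w' (Finset.mem_erase.mpr ⟨hww', hw'⟩)
          have hle := hf0min _ (Finset.mem_of_mem_erase hmem)
          rcases lt_or_eq_of_le hle with h | h
          · exact h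
          · exfalso
            exact (Finset.mem_erase.mp hmem).1
              (hμ (by exact_mod_cast hf0A) (by exact_mod_cast Finset.mem_of_mem_erase hmem) h).symm
        · exfalso; subst hww'
          exact absurd hlt (not_lt.mpr (hw0min w hw))
        · rw [Function.update_of_ne hww, Function.update_of_ne hww']
          exact hφ'mono w (Finset.mem_erase.mpr ⟨hww, hw⟩) w' (Finset.mem_erase.mpr ⟨hww', hw'⟩) hlt

/-- For a finset `S` of edges all incident to `uh`, choose the other endpoints. -/
lemma exists_endpoint_map {V : Type} [Fintype V] (G : EOBigraph V) (uh : V) (S : Finset (Sym2 V))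
    (hS : ∀ f ∈ S, f ∈ G.toEOGraph.graph.edgeSet ∧ uh ∈ f) :
    ∃ ν : Sym2 V → V, (∀ f ∈ S, f = s(uh, ν f) ∧ G.toEOGraph.graph.Adj uh (ν f)) ∧
      Set.InjOn ν ↑S := by
  classical
  have : Nonempty V := ⟨uh⟩
  have hch : ∀ f ∈ S, ∃ y, f = s(uh, y) := fun f hf => Sym2.mem_iff_exists.mp (hS f hf).2
  choose! ν hν using hch
  refine ⟨ν, fun f hf => ⟨hν f hf, ?_⟩, ?_⟩
  · have h1 := (hS f hf).1
    rw [hν f hf] at h1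
    exact G.toEOGraph.graph.mem_edgeSet.mp h1
  · intro f hf g hg heq
    calc f = s(uh, ν f) := hν f (by exact_mod_cast hf)
    _ = s(uh, ν g) := by rw [heq]
    _ = g := (hν g (by exact_mod_cast hg)).symm

/-- The key induction: an edge-ordered bigraph reached in `j` extension steps from `T₀`,
with all intermediate graphs having at most `c` vertices, embeds into `G` whenever
`G^{c-left}_{j+r}` has an edge; moreover the minimum edge of the embedded graph can be
placed on an edge of `G^{c-left}_r`. -/
lemma chain_claim {V : Type} [Fintype V] (G : EOBigraph V) (c : ℕ)
    (g : ℕ → BundledBigraph) (h0 : IsT0 (g 0).big) :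
    ∀ j : ℕ, (∀ k < j, IsExtensionOf (g (k+1)).big (g k).big) →
    (∀ k ≤ j, (g k).n ≤ c) →
    ∀ r : ℕ, (leftIter c (j + r) G).toEOGraph.graph.edgeSet.Nonempty →
    ∃ F : Fin (g j).n → V, Function.Injective F ∧
      (∀ a b, (g j).big.toEOGraph.graph.Adj a b → G.toEOGraph.graph.Adj (F a) (F b)) ∧
      (∀ e ∈ (g j).big.toEOGraph.graph.edgeSet, ∀ e' ∈ (g j).big.toEOGraph.graph.edgeSet,
        (g j).big.toEOGraph.label e < (g j).big.toEOGraph.label e' →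
        G.toEOGraph.label (Sym2.map F e) < G.toEOGraph.label (Sym2.map F e')) ∧
      (∀ a, G.side (F a) = (g j).big.side a) ∧
      ∃ x y : Fin (g j).n, (g j).big.toEOGraph.graph.Adj x y ∧
        (g j).big.side x = false ∧ (g j).big.side y = true ∧
        (∀ e ∈ (g j).big.toEOGraph.graph.edgeSet,
          (g j).big.toEOGraph.label s(x, y) ≤ (g j).big.toEOGraph.label e) ∧
        Sym2.map F s(x, y) ∈ (leftIter c r G).toEOGraph.graph.edgeSet := by
  intro j
  induction j with
  | zero =>
    intro _ _ r hne
    classical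
    rw [Nat.zero_add] at hne
    obtain ⟨e0, he0⟩ := hne
    have hrep := e0.exists_rep
    obtain ⟨⟨u0, v0⟩, rfl⟩ := hrep
    have heG : s(u0, v0) ∈ G.toEOGraph.graph.edgeSet :=
      leftIter_subset_base c G r he0
    have hadjG : G.toEOGraph.graph.Adj u0 v0 := G.toEOGraph.graph.mem_edgeSet.mp heG
    have hsides : G.side u0 ≠ G.side v0 := G.proper u0 v0 hadjG
    obtain ⟨u, v, hadjuv, hu, hv, hmem⟩ :
        ∃ u v, G.toEOGraph.graph.Adj u v ∧ G.side u = false ∧ G.side v = true ∧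
          s(u, v) ∈ (leftIter c r G).toEOGraph.graph.edgeSet := by
      cases hb : G.side u0 with
      | false =>
        refine ⟨u0, v0, hadjG, hb, ?_, he0⟩
        rw [hb] at hsides; cases hb2 : G.side v0
        · exact absurd hb2.symm hsides
        · rfl
      | true =>
        refine ⟨v0, u0, hadjG.symm, ?_, hb, Sym2.eq_swap ▸ he0⟩
        rw [hb] at hsides; cases hb2 : G.side v0
        · rfl
        · exact absurd hb2.symm hsides
    obtain ⟨hcard2, hadjall⟩ := h0
    have h1lt : 1 < Fintype.card (Fin (g 0).n) := by rw [hcard2]; norm_num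
    obtain ⟨p, q, hpq⟩ := Fintype.exists_pair_of_one_lt_card h1lt
    have hadjpq := hadjall p q hpq
    have hsidepq : (g 0).big.side p ≠ (g 0).big.side q := (g 0).big.proper p q hadjpq
    obtain ⟨x, y, hxy, hsx, hsy⟩ :
        ∃ x y : Fin (g 0).n, x ≠ y ∧ (g 0).big.side x = false ∧ (g 0).big.side y = true := by
      cases hb : (g 0).big.side p with
      | false =>
        refine ⟨p, q, hpq, hb, ?_⟩
        rw [hb] at hsidepq; cases hb2 : (g 0).big.side q
        · exact absurd hb2.symm hsidepq
        · rfl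
      | true =>
        refine ⟨q, p, hpq.symm, ?_, hb⟩
        rw [hb] at hsidepq; cases hb2 : (g 0).big.side q
        · rfl
        · exact absurd hb2.symm hsidepq
    have hadjxy := hadjall x y hxy
    have hall : ∀ z : Fin (g 0).n, z = x ∨ z = y := by
      intro z
      by_contra hz
      push_neg at hz
      have h3 : ({x, y, z} : Finset (Fin (g 0).n)).card = 3 := by
        rw [Finset.card_insert_of_notMem (by simp [hxy, Ne.symm hz.1]),
          Finset.card_insert_of_notMem (by simp [Ne.symm hz.2]), Finset.card_singleton]
      have hle := Finset.card_le_univ ({x, y, z} : Finset (Fin (g 0).n))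
      rw [h3] at hle
      omega
    have hedge0 : ∀ e ∈ (g 0).big.toEOGraph.graph.edgeSet, e = s(x, y) := by
      intro e
      induction e using Sym2.inductionOn with
      | hf a b =>
        intro he
        have hab : (g 0).big.toEOGraph.graph.Adj a b :=
          (g 0).big.toEOGraph.graph.mem_edgeSet.mp he
        have hne := hab.ne
        rcases hall a with ha | ha <;> rcases hall b with hb | hb <;> subst ha <;> subst hb
        · exact absurd rfl hne
        · rfl
        · exact Sym2.eq_swap
        · exact absurd rfl hne
    set F : Fin (g 0).n → V := fun z => if z = x then u else v with hF
    have hFx : F x = u := by simp [hF]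
    have hFy : F y = v := by simp [hF, Ne.symm hxy]
    have hFval : ∀ z, F z = u ∨ F z = v := by
      intro z; rcases hall z with hz | hz <;> subst hz
      · exact Or.inl hFx
      · exact Or.inr hFy
    refine ⟨F, ?_, ?_, ?_, ?_, x, y, hadjxy, hsx, hsy, ?_, ?_⟩
    · intro a b hab
      rcases hall a with ha | ha <;> rcases hall b with hb | hb <;> subst ha <;> subst hb
      · rfl
      · rw [hFx, hFy] at hab; exact absurd hab hadjuv.ne
      · rw [hFx, hFy] at hab; exact absurd hab.symm hadjuv.ne
      · rfl
    · intro a b hab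
      have hne := hab.ne
      rcases hall a with ha | ha <;> rcases hall b with hb | hb <;> subst ha <;> subst hb
      · exact absurd rfl hne
      · rw [hFx, hFy]; exact hadjuv
      · rw [hFx, hFy]; exact hadjuv.symm
      · exact absurd rfl hne
    · intro e he e' he' hlt
      rw [hedge0 e he, hedge0 e' he'] at hlt
      exact absurd hlt (lt_irrefl _)
    · intro a
      rcases hall a with ha | ha <;> subst ha
      · rw [hFx, hu, hsx]
      · rw [hFy, hv, hsy]
    · intro e he; rw [hedge0 e he]
    · rw [Sym2.map_pair_eq, hFx, hFy]; exact hmem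
  | succ j ih =>
    intro hext hcard r hne
    classical
    have hne' : (leftIter c (j + (r+1)) G).toEOGraph.graph.edgeSet.Nonempty := by
      rw [show j + (r+1) = (j+1) + r by omega]; exact hne
    obtain ⟨Fj, hFjinj, hFjadj, hFjord, hFjside, x, y, hadjxy, hsx, hsy, hminxy, hpin⟩ :=
      ih (fun k hk => hext k (Nat.lt_succ_of_lt hk))
        (fun k hk => hcard k (Nat.le_succ_of_le hk)) (r+1) hne'
    obtain ⟨ι, x₀, y₀, hιinj, hadj₀, hsx₀, hsy₀, hmin₀, hadjιiff, hsideι, hlabι, hleaf, hlr⟩ :=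
      hext j (Nat.lt_succ_self j)
    have hmemxy : s(x, y) ∈ (g j).big.toEOGraph.graph.edgeSet :=
      (g j).big.toEOGraph.graph.mem_edgeSet.mpr hadjxy
    have hmemxy₀ : s(x₀, y₀) ∈ (g j).big.toEOGraph.graph.edgeSet :=
      (g j).big.toEOGraph.graph.mem_edgeSet.mpr hadj₀
    have hlabeq : (g j).big.toEOGraph.label s(x, y) = (g j).big.toEOGraph.label s(x₀, y₀) :=
      le_antisymm (hminxy _ hmemxy₀) (hmin₀ _ hmemxy)
    have hsym2 : s(x, y) = s(x₀, y₀) := (g j).big.toEOGraph.inj _ hmemxy _ hmemxy₀ hlabeq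
    obtain ⟨hx0, hy0⟩ : x = x₀ ∧ y = y₀ := by
      rcases Sym2.eq_iff.mp hsym2 with h | h
      · exact h
      · exfalso; rw [h.1, hsy₀] at hsx; exact Bool.noConfusion hsx
    subst hx0; subst hy0
    -- the pinned edge and its left-leaning structure
    have hpin' := hpin
    rw [leftIter_succ'] at hpin'
    obtain ⟨-, heLL⟩ := leftSub_edge hpin'
    obtain ⟨u1, v1, heeq, -, hu1side, hv1side, S, S', hScard, hS'card, hSinc, hS'inc, hSS', hS'top⟩ :=
      heLL
    rw [leftIter_side] at hu1side hv1side
    rw [Sym2.map_pair_eq] at heeq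
    obtain ⟨hux, hvy⟩ : u1 = Fj x ∧ v1 = Fj y := by
      rcases Sym2.eq_iff.mp heeq with h | h
      · exact ⟨h.1.symm, h.2.symm⟩
      · exfalso
        have h1 : G.side (Fj x) = false := (hFjside x).trans hsx
        rw [h.1, hv1side] at h1
        exact Bool.noConfusion h1
    subst hux; subst hvy
    rw [leftIter_label] at hSS' hS'top
    -- endpoint maps for S and S'
    obtain ⟨ν, hν, hνinj⟩ := exists_endpoint_map G (Fj x) S
      (fun f hf => ⟨leftIter_subset_base c G r (hSinc f hf).1, (hSinc f hf).2⟩)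
    obtain ⟨ν', hν', hν'inj⟩ := exists_endpoint_map G (Fj y) S'
      (fun f hf => ⟨leftIter_subset_base c G r (hS'inc f hf).1, (hS'inc f hf).2⟩)
    -- leaf sets
    set Lx : Finset (Fin (g (j+1)).n) := Finset.univ.filter
      (fun w => w ∉ Set.range ι ∧ (g (j+1)).big.toEOGraph.graph.Adj w (ι x)) with hLxdef
    set Ly : Finset (Fin (g (j+1)).n) := Finset.univ.filter
      (fun w => w ∉ Set.range ι ∧ (g (j+1)).big.toEOGraph.graph.Adj w (ι y)) with hLydef
    have hLxmem : ∀ {w}, w ∈ Lx ↔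
        w ∉ Set.range ι ∧ (g (j+1)).big.toEOGraph.graph.Adj w (ι x) := by
      intro w; rw [hLxdef]; simp
    have hLymem : ∀ {w}, w ∈ Ly ↔
        w ∉ Set.range ι ∧ (g (j+1)).big.toEOGraph.graph.Adj w (ι y) := by
      intro w; rw [hLydef]; simp
    have hxney : ι x ≠ ι y := fun h => hadjxy.ne (hιinj h)
    have huniq : ∀ w, w ∉ Set.range ι →
        ¬((g (j+1)).big.toEOGraph.graph.Adj w (ι x) ∧
          (g (j+1)).big.toEOGraph.graph.Adj w (ι y)) := by
      rintro w hw ⟨h1, h2⟩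
      obtain ⟨u2, hu2, huu⟩ := (hleaf w hw).1
      exact hxney ((huu (ι x) h1).trans ((huu (ι y) h2).symm))
    have htri : ∀ w : Fin (g (j+1)).n, w ∈ Set.range ι ∨ w ∈ Lx ∨ w ∈ Ly := by
      intro w
      by_cases hw : w ∈ Set.range ι
      · exact Or.inl hw
      · obtain ⟨u2, hu2, -⟩ := (hleaf w hw).1
        rcases ((hleaf w hw).2 u2 hu2).1 with h | h
        · exact Or.inr (Or.inl (hLxmem.mpr ⟨hw, h ▸ hu2⟩))
        · exact Or.inr (Or.inr (hLymem.mpr ⟨hw, h ▸ hu2⟩))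
    -- cardinalities
    set U : Finset V := Finset.univ.image Fj with hUdef
    have hUcard : U.card ≤ (g j).n := by
      rw [hUdef]
      exact le_trans Finset.card_image_le (by simp)
    have himg : (Finset.univ.image ι).card = (g j).n := by
      rw [Finset.card_image_of_injective _ hιinj, Finset.card_univ, Fintype.card_fin]
    have hmemimg : ∀ w : Fin (g (j+1)).n, w ∈ Finset.univ.image ι ↔ w ∈ Set.range ι := by
      intro w; simp [Set.mem_range]
    have hdisjxy : Disjoint Lx Ly := by
      rw [Finset.disjoint_left]
      intro w hwx hwy
      exact huniq w (hLxmem.mp hwx).1 ⟨(hLxmem.mp hwx).2, (hLymem.mp hwy).2⟩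
    have hsubxy : Lx ∪ Ly ⊆ Finset.univ \ Finset.univ.image ι := by
      intro w hw
      rcases Finset.mem_union.mp hw with h | h
      · exact Finset.mem_sdiff.mpr
          ⟨Finset.mem_univ w, fun hc => (hLxmem.mp h).1 ((hmemimg w).mp hc)⟩
      · exact Finset.mem_sdiff.mpr
          ⟨Finset.mem_univ w, fun hc => (hLymem.mp h).1 ((hmemimg w).mp hc)⟩
    have hcount : Lx.card + Ly.card + (g j).n ≤ c := by
      have h1 : (Lx ∪ Ly).card ≤ (Finset.univ \ Finset.univ.image ι).card :=
        Finset.card_le_card hsubxy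
      have h4 : (Finset.univ \ Finset.univ.image ι).card
          = Fintype.card (Fin ((g (j+1)).n)) - (g j).n := by
        rw [Finset.card_sdiff_of_subset (Finset.subset_univ _), himg]
        simp
      rw [Finset.card_union_of_disjoint hdisjxy, h4] at h1
      have h2 : (g (j+1)).n ≤ c := hcard (j+1) (le_refl _)
      have h3 : (g j).n ≤ (g (j+1)).n := by
        rw [← himg]
        exact le_trans (Finset.card_le_univ _) (by simp)
      have h5 : Fintype.card (Fin ((g (j+1)).n)) = (g (j+1)).n := Fintype.card_fin _
      omega
    -- available edges
    set AX : Finset (Sym2 V) := S.filter (fun f => ν f ∉ U) with hAXdef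
    set AY : Finset (Sym2 V) := S'.filter (fun f => ν' f ∉ U) with hAYdef
    have hAXcard : Lx.card ≤ AX.card := by
      have hb : (S.filter (fun f => ¬ ν f ∉ U)).card ≤ U.card := by
        refine Finset.card_le_card_of_injOn ν (fun f hf => ?_) (hνinj.mono ?_)
        · exact not_not.mp (Finset.mem_filter.mp hf).2
        · exact_mod_cast Finset.filter_subset _ _
      have htot := Finset.card_filter_add_card_filter_not (s := S)
        (p := fun f => ν f ∉ U)
      rw [← hAXdef, hScard] at htot
      omega
    have hAYcard : Ly.card ≤ AY.card := by
      have hb : (S'.filter (fun f => ¬ ν' f ∉ U)).card ≤ U.card := by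
        refine Finset.card_le_card_of_injOn ν' (fun f hf => ?_) (hν'inj.mono ?_)
        · exact not_not.mp (Finset.mem_filter.mp hf).2
        · exact_mod_cast Finset.filter_subset _ _
      have htot := Finset.card_filter_add_card_filter_not (s := S')
        (p := fun f => ν' f ∉ U)
      rw [← hAYdef, hS'card] at htot
      omega
    have hnon : Nonempty (Sym2 V) := ⟨s(Fj x, Fj x)⟩
    -- monotone matchings
    obtain ⟨φX, hφXA, hφXinj, hφXmono⟩ := exists_mono_matching
      (fun w => (g (j+1)).big.toEOGraph.label s(w, ι x)) G.toEOGraph.label Lx AX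
      (fun f hf f' hf' heq2 => G.toEOGraph.inj f
        (leftIter_subset_base c G r (hSinc f (Finset.filter_subset _ _ (by exact_mod_cast hf))).1)
        f' (leftIter_subset_base c G r
          (hSinc f' (Finset.filter_subset _ _ (by exact_mod_cast hf'))).1) heq2) hAXcard
    obtain ⟨φY, hφYA, hφYinj, hφYmono⟩ := exists_mono_matching
      (fun w => (g (j+1)).big.toEOGraph.label s(w, ι y)) G.toEOGraph.label Ly AY
      (fun f hf f' hf' heq2 => G.toEOGraph.inj f
        (leftIter_subset_base c G r (hS'inc f (Finset.filter_subset _ _ (by exact_mod_cast hf))).1)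
        f' (leftIter_subset_base c G r
          (hS'inc f' (Finset.filter_subset _ _ (by exact_mod_cast hf'))).1) heq2) hAYcard
    have hφXS : ∀ w ∈ Lx, φX w ∈ S := fun w hw => Finset.filter_subset _ _ (hφXA w hw)
    have hφYS' : ∀ w ∈ Ly, φY w ∈ S' := fun w hw => Finset.filter_subset _ _ (hφYA w hw)
    have hφXnotU : ∀ w ∈ Lx, ν (φX w) ∉ U :=
      fun w hw => (Finset.mem_filter.mp (hφXA w hw)).2
    have hφYnotU : ∀ w ∈ Ly, ν' (φY w) ∉ U :=
      fun w hw => (Finset.mem_filter.mp (hφYA w hw)).2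
    -- define the embedding
    have hnonFin : Nonempty (Fin (g j).n) := ⟨x⟩
    set F : Fin (g (j+1)).n → V := fun w =>
      if w ∈ Set.range ι then Fj (Function.invFun ι w)
      else if (g (j+1)).big.toEOGraph.graph.Adj w (ι x) then ν (φX w) else ν' (φY w) with hFdef
    have hFι : ∀ a, F (ι a) = Fj a := by
      intro a
      have hmem2 : (ι a) ∈ Set.range ι := ⟨a, rfl⟩
      simp only [hFdef, if_pos hmem2]
      congr 1
      exact Function.leftInverse_invFun hιinj a
    have hFLx : ∀ w ∈ Lx, F w = ν (φX w) := by
      intro w hw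
      obtain ⟨h1, h2⟩ := hLxmem.mp hw
      simp only [hFdef, if_neg h1, if_pos h2]
    have hFLy : ∀ w ∈ Ly, F w = ν' (φY w) := by
      intro w hw
      obtain ⟨h1, h2⟩ := hLymem.mp hw
      have h3 : ¬ (g (j+1)).big.toEOGraph.graph.Adj w (ι x) := fun hc => huniq w h1 ⟨hc, h2⟩
      simp only [hFdef, if_neg h1, if_neg h3]
    -- side facts
    have hsideFjx : G.side (Fj x) = false := (hFjside x).trans hsx
    have hsideFjy : G.side (Fj y) = true := (hFjside y).trans hsy
    have hνside : ∀ f ∈ S, G.side (ν f) = true := by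
      intro f hf
      have hp := G.proper _ _ (hν f hf).2
      rw [hsideFjx] at hp
      cases hb : G.side (ν f)
      · exact absurd hb.symm hp
      · rfl
    have hν'side : ∀ f ∈ S', G.side (ν' f) = false := by
      intro f hf
      have hp := G.proper _ _ (hν' f hf).2
      rw [hsideFjy] at hp
      cases hb : G.side (ν' f)
      · rfl
      · exact absurd hb.symm hp
    have hFU : ∀ a : Fin (g j).n, Fj a ∈ U :=
      fun a => Finset.mem_image_of_mem _ (Finset.mem_univ a)
    -- injectivity
    have hFinj : Function.Injective F := by
      intro a b hab
      rcases htri a with ⟨a', rfl⟩ | ha | ha <;> rcases htri b with ⟨b', rfl⟩ | hb | hb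
      · rw [hFι, hFι] at hab; exact congrArg ι (hFjinj hab)
      · exfalso; rw [hFι, hFLx b hb] at hab
        exact hφXnotU b hb (by rw [← hab]; exact hFU a')
      · exfalso; rw [hFι, hFLy b hb] at hab
        exact hφYnotU b hb (by rw [← hab]; exact hFU a')
      · exfalso; rw [hFLx a ha, hFι] at hab
        exact hφXnotU a ha (by rw [hab]; exact hFU b')
      · rw [hFLx a ha, hFLx b hb] at hab
        exact hφXinj (by exact_mod_cast ha) (by exact_mod_cast hb)
          (hνinj (by exact_mod_cast hφXS a ha) (by exact_mod_cast hφXS b hb) hab)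
      · exfalso
        rw [hFLx a ha, hFLy b hb] at hab
        have h1 := hνside _ (hφXS a ha)
        rw [hab, hν'side _ (hφYS' b hb)] at h1
        exact Bool.noConfusion h1
      · exfalso; rw [hFLy a ha, hFι] at hab
        exact hφYnotU a ha (by rw [hab]; exact hFU b')
      · exfalso
        rw [hFLy a ha, hFLx b hb] at hab
        have h1 := hνside _ (hφXS b hb)
        rw [← hab, hν'side _ (hφYS' a ha)] at h1
        exact Bool.noConfusion h1
      · rw [hFLy a ha, hFLy b hb] at hab
        exact hφYinj (by exact_mod_cast ha) (by exact_mod_cast hb)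
          (hν'inj (by exact_mod_cast hφYS' a ha) (by exact_mod_cast hφYS' b hb) hab)
    -- adjacency
    have hkey : ∀ a b, (g (j+1)).big.toEOGraph.graph.Adj a b → a ∉ Set.range ι →
        G.toEOGraph.graph.Adj (F a) (F b) := by
      intro a b hab ha
      rcases ((hleaf a ha).2 b hab).1 with rfl | rfl
      · have haLx : a ∈ Lx := hLxmem.mpr ⟨ha, hab⟩
        rw [hFLx a haLx, hFι]
        exact ((hν _ (hφXS a haLx)).2).symm
      · have haLy : a ∈ Ly := hLymem.mpr ⟨ha, hab⟩
        rw [hFLy a haLy, hFι]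
        exact ((hν' _ (hφYS' a haLy)).2).symm
    have hFadj : ∀ a b, (g (j+1)).big.toEOGraph.graph.Adj a b →
        G.toEOGraph.graph.Adj (F a) (F b) := by
      intro a b hab
      by_cases ha : a ∈ Set.range ι
      · by_cases hb : b ∈ Set.range ι
        · obtain ⟨a', rfl⟩ := ha; obtain ⟨b', rfl⟩ := hb
          rw [hFι, hFι]; exact hFjadj a' b' ((hadjιiff a' b').mpr hab)
        · exact (hkey b a hab.symm hb).symm
      · exact hkey a b hab ha
    -- edge classification
    have hclass : ∀ e ∈ (g (j+1)).big.toEOGraph.graph.edgeSet,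
        (∃ h ∈ (g j).big.toEOGraph.graph.edgeSet, e = Sym2.map ι h) ∨
        (∃ w ∈ Lx, e = s(w, ι x)) ∨ (∃ w ∈ Ly, e = s(w, ι y)) := by
      intro e
      induction e using Sym2.inductionOn with
      | hf a b =>
        intro he
        have hab : (g (j+1)).big.toEOGraph.graph.Adj a b :=
          (g (j+1)).big.toEOGraph.graph.mem_edgeSet.mp he
        by_cases ha : a ∈ Set.range ι
        · by_cases hb : b ∈ Set.range ι
          · obtain ⟨a', rfl⟩ := ha; obtain ⟨b', rfl⟩ := hb
            exact Or.inl ⟨s(a', b'),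
              (g j).big.toEOGraph.graph.mem_edgeSet.mpr ((hadjιiff a' b').mpr hab),
              (Sym2.map_pair_eq ι a' b').symm⟩
          · rcases ((hleaf b hb).2 a hab.symm).1 with rfl | rfl
            · exact Or.inr (Or.inl ⟨b, hLxmem.mpr ⟨hb, hab.symm⟩, Sym2.eq_swap⟩)
            · exact Or.inr (Or.inr ⟨b, hLymem.mpr ⟨hb, hab.symm⟩, Sym2.eq_swap⟩)
        · rcases ((hleaf a ha).2 b hab).1 with rfl | rfl
          · exact Or.inr (Or.inl ⟨a, hLxmem.mpr ⟨ha, hab⟩, rfl⟩)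
          · exact Or.inr (Or.inr ⟨a, hLymem.mpr ⟨ha, hab⟩, rfl⟩)
    -- label facts
    have hι_min : ∀ h ∈ (g j).big.toEOGraph.graph.edgeSet,
        (g (j+1)).big.toEOGraph.label (Sym2.map ι s(x, y)) ≤
          (g (j+1)).big.toEOGraph.label (Sym2.map ι h) := by
      intro h hh
      rcases lt_or_eq_of_le (hminxy h hh) with hlt | heq2
      · exact le_of_lt ((hlabι _ hmemxy _ hh).mp hlt)
      · rw [(g j).big.toEOGraph.inj _ hmemxy _ hh heq2]
    have hleaf_lt : ∀ w u2, w ∉ Set.range ι → (g (j+1)).big.toEOGraph.graph.Adj w u2 →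
        (g (j+1)).big.toEOGraph.label s(w, u2) <
          (g (j+1)).big.toEOGraph.label (Sym2.map ι s(x, y)) := by
      intro w u2 hw hadj2
      rw [Sym2.map_pair_eq]
      exact ((hleaf w hw).2 u2 hadj2).2
    have hK1 : ∀ h ∈ (g j).big.toEOGraph.graph.edgeSet,
        G.toEOGraph.label (Sym2.map Fj s(x, y)) ≤ G.toEOGraph.label (Sym2.map Fj h) := by
      intro h hh
      rcases lt_or_eq_of_le (hminxy h hh) with hlt | heq2
      · exact le_of_lt (hFjord _ hmemxy _ hh hlt)
      · rw [(g j).big.toEOGraph.inj _ hmemxy _ hh heq2]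
    have hc0 : 0 < c := lt_of_lt_of_le x.pos (hcard j (Nat.le_succ j))
    have hS'ne : S'.Nonempty := Finset.card_pos.mp (by rw [hS'card]; exact hc0)
    have hSlt : ∀ f ∈ S, G.toEOGraph.label f < G.toEOGraph.label (Sym2.map Fj s(x, y)) := by
      intro f hf
      obtain ⟨f', hf'⟩ := hS'ne
      exact lt_trans (hSS' f hf f' hf') (hS'top f' hf')
    -- map computations
    have hmapι : ∀ h, Sym2.map F (Sym2.map ι h) = Sym2.map Fj h := by
      intro h
      induction h using Sym2.inductionOn with
      | hf a b => rw [Sym2.map_pair_eq, Sym2.map_pair_eq, Sym2.map_pair_eq, hFι, hFι]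
    have hmapLx : ∀ w ∈ Lx, Sym2.map F s(w, ι x) = φX w := by
      intro w hw
      rw [Sym2.map_pair_eq, hFLx w hw, hFι, Sym2.eq_swap]
      exact ((hν _ (hφXS w hw)).1).symm
    have hmapLy : ∀ w ∈ Ly, Sym2.map F s(w, ι y) = φY w := by
      intro w hw
      rw [Sym2.map_pair_eq, hFLy w hw, hFι, Sym2.eq_swap]
      exact ((hν' _ (hφYS' w hw)).1).symm
    -- order preservation
    have hFord : ∀ e ∈ (g (j+1)).big.toEOGraph.graph.edgeSet,
        ∀ e' ∈ (g (j+1)).big.toEOGraph.graph.edgeSet,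
        (g (j+1)).big.toEOGraph.label e < (g (j+1)).big.toEOGraph.label e' →
        G.toEOGraph.label (Sym2.map F e) < G.toEOGraph.label (Sym2.map F e') := by
      intro e he e' he' hlt
      rcases hclass e he with ⟨h, hh, rfl⟩ | ⟨w, hw, rfl⟩ | ⟨w, hw, rfl⟩ <;>
        rcases hclass e' he' with ⟨h', hh', rfl⟩ | ⟨w', hw', rfl⟩ | ⟨w', hw', rfl⟩
      · rw [hmapι, hmapι]
        exact hFjord _ hh _ hh' ((hlabι _ hh _ hh').mpr hlt)
      · exfalso
        exact lt_asymm hlt (lt_of_lt_of_le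
          (hleaf_lt w' (ι x) (hLxmem.mp hw').1 (hLxmem.mp hw').2) (hι_min h hh))
      · exfalso
        exact lt_asymm hlt (lt_of_lt_of_le
          (hleaf_lt w' (ι y) (hLymem.mp hw').1 (hLymem.mp hw').2) (hι_min h hh))
      · rw [hmapLx w hw, hmapι]
        exact lt_of_lt_of_le (hSlt _ (hφXS w hw)) (hK1 h' hh')
      · rw [hmapLx w hw, hmapLx w' hw']
        exact hφXmono w hw w' hw' hlt
      · rw [hmapLx w hw, hmapLy w' hw']
        exact hSS' _ (hφXS w hw) _ (hφYS' w' hw')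
      · rw [hmapLy w hw, hmapι]
        exact lt_of_lt_of_le (hS'top _ (hφYS' w hw)) (hK1 h' hh')
      · exfalso
        exact lt_asymm hlt (hlr w' w (hLxmem.mp hw').1 (hLymem.mp hw).1
          (hLxmem.mp hw').2 (hLymem.mp hw).2)
      · rw [hmapLy w hw, hmapLy w' hw']
        exact hφYmono w hw w' hw' hlt
    -- sides
    have hsideLx : ∀ w ∈ Lx, (g (j+1)).big.side w = true := by
      intro w hw
      have hp := (g (j+1)).big.proper _ _ (hLxmem.mp hw).2
      rw [hsideι x, hsx] at hp
      cases hb : (g (j+1)).big.side w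
      · exact absurd hb hp
      · rfl
    have hsideLy : ∀ w ∈ Ly, (g (j+1)).big.side w = false := by
      intro w hw
      have hp := (g (j+1)).big.proper _ _ (hLymem.mp hw).2
      rw [hsideι y, hsy] at hp
      cases hb : (g (j+1)).big.side w
      · rfl
      · exact absurd hb hp
    have hFside : ∀ a, G.side (F a) = (g (j+1)).big.side a := by
      intro a
      rcases htri a with ⟨a', rfl⟩ | ha | ha
      · rw [hFι, hsideι a']; exact hFjside a'
      · rw [hFLx a ha, hνside _ (hφXS a ha), hsideLx a ha]
      · rw [hFLy a ha, hν'side _ (hφYS' a ha), hsideLy a ha]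
    refine ⟨F, hFinj, hFadj, hFord, hFside, ?_⟩
    -- the new minimum edge
    by_cases hLxne : Lx.Nonempty
    · obtain ⟨wm, hwm, hwmmin⟩ := Lx.exists_min_image
        (fun w => (g (j+1)).big.toEOGraph.label s(w, ι x)) hLxne
      refine ⟨ι x, wm, ((hLxmem.mp hwm).2).symm,
        by rw [hsideι x]; exact hsx, hsideLx wm hwm, ?_, ?_⟩
      · intro e he
        rw [show s(ι x, wm) = s(wm, ι x) from Sym2.eq_swap]
        rcases hclass e he with ⟨h, hh, rfl⟩ | ⟨w, hw, rfl⟩ | ⟨w, hw, rfl⟩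
        · exact le_of_lt (lt_of_lt_of_le
            (hleaf_lt wm (ι x) (hLxmem.mp hwm).1 (hLxmem.mp hwm).2) (hι_min h hh))
        · exact hwmmin w hw
        · exact le_of_lt (hlr wm w (hLxmem.mp hwm).1 (hLymem.mp hw).1
            (hLxmem.mp hwm).2 (hLymem.mp hw).2)
      · rw [show s(ι x, wm) = s(wm, ι x) from Sym2.eq_swap, hmapLx wm hwm]
        exact (hSinc _ (hφXS wm hwm)).1
    · by_cases hLyne : Ly.Nonempty
      · obtain ⟨wm, hwm, hwmmin⟩ := Ly.exists_min_image
          (fun w => (g (j+1)).big.toEOGraph.label s(w, ι y)) hLyne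
        refine ⟨wm, ι y, (hLymem.mp hwm).2, hsideLy wm hwm,
          by rw [hsideι y]; exact hsy, ?_, ?_⟩
        · intro e he
          rcases hclass e he with ⟨h, hh, rfl⟩ | ⟨w, hw, rfl⟩ | ⟨w, hw, rfl⟩
          · exact le_of_lt (lt_of_lt_of_le
              (hleaf_lt wm (ι y) (hLymem.mp hwm).1 (hLymem.mp hwm).2) (hι_min h hh))
          · exact (hLxne ⟨w, hw⟩).elim
          · exact hwmmin w hw
        · rw [hmapLy wm hwm]
          exact (hS'inc _ (hφYS' wm hwm)).1
      · refine ⟨ι x, ι y, (hadjιiff x y).mp hadjxy,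
          by rw [hsideι x]; exact hsx, by rw [hsideι y]; exact hsy, ?_, ?_⟩
        · intro e he
          rcases hclass e he with ⟨h, hh, rfl⟩ | ⟨w, hw, rfl⟩ | ⟨w, hw, rfl⟩
          · rw [← Sym2.map_pair_eq ι x y]; exact hι_min h hh
          · exact (hLxne ⟨w, hw⟩).elim
          · exact (hLyne ⟨w, hw⟩).elim
        · rw [← Sym2.map_pair_eq ι x y, hmapι]
          exact leftIter_subset c r G hpin

end Stmt6Helpers

/-- If `T` is a right caterpillar with `c` vertices and recursive depth `i`,
and `G^{c-left}_i` contains an edge, then `G` contains `T`. -/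
theorem stmt_6 {W V : Type} [Fintype W] [Fintype V] (T : EOBigraph W) (c i : ℕ)
    (hT : IsRightCaterpillar T) (hc : Fintype.card W = c) (hi : HasRecursiveDepth T i)
    (G : EOBigraph V) (hne : (leftIter c i G).toEOGraph.graph.edgeSet.Nonempty) :
    BContains G T := by
  classical
  obtain ⟨⟨g, h0, hiso, hext⟩, -⟩ := hi
  obtain ⟨φ, hφadj, hφord, hφside⟩ := hiso
  -- all intermediate graphs have at most `c` vertices
  have hcgi : (g i).n = c := by
    have h1 := Fintype.card_congr φ
    rw [Fintype.card_fin] at h1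
    rw [h1, hc]
  have hmono : ∀ k, k < i → (g k).n ≤ (g (k+1)).n := by
    intro k hk
    obtain ⟨ι, x₀, y₀, hιinj, -⟩ := hext k hk
    have h1 := Fintype.card_le_of_injective ι hιinj
    simpa using h1
  have hcards : ∀ k ≤ i, (g k).n ≤ c := by
    have key : ∀ l, l ≤ i → ∀ k ≤ l, (g k).n ≤ (g l).n := by
      intro l
      induction l with
      | zero => intro _ k hk; rw [Nat.le_zero.mp hk]
      | succ l ihl =>
        intro hl k hk
        rcases Nat.lt_succ_iff_lt_or_eq.mp (Nat.lt_succ_of_le hk) with h | h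
        · exact le_trans (ihl (le_trans (Nat.le_succ l) hl) k (Nat.lt_succ_iff.mp h))
            (hmono l (Nat.lt_of_lt_of_le (Nat.lt_succ_self l) hl))
        · rw [h]
    intro k hk
    rw [← hcgi]
    exact key i (le_refl i) k hk
  obtain ⟨F, hFinj, hFadj, hFord, hFside, -⟩ :=
    chain_claim G c g h0 i hext hcards 0 (by simpa using hne)
  -- transport the embedding through the isomorphism
  have hmem' : ∀ e ∈ T.toEOGraph.graph.edgeSet,
      Sym2.map φ.symm e ∈ (g i).big.toEOGraph.graph.edgeSet := by
    intro e
    induction e using Sym2.inductionOn with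
    | hf a b =>
      intro he
      rw [Sym2.map_pair_eq]
      refine (g i).big.toEOGraph.graph.mem_edgeSet.mpr ((hφadj _ _).mpr ?_)
      rw [Equiv.apply_symm_apply, Equiv.apply_symm_apply]
      exact T.toEOGraph.graph.mem_edgeSet.mp he
  have hmap2 : ∀ e : Sym2 W, Sym2.map φ (Sym2.map φ.symm e) = e := by
    intro e
    induction e using Sym2.inductionOn with
    | hf a b =>
      rw [Sym2.map_pair_eq, Sym2.map_pair_eq, Equiv.apply_symm_apply, Equiv.apply_symm_apply]
  have hmap3 : ∀ e : Sym2 W,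
      Sym2.map (fun a => F (φ.symm a)) e = Sym2.map F (Sym2.map φ.symm e) := by
    intro e
    induction e using Sym2.inductionOn with
    | hf a b => rw [Sym2.map_pair_eq, Sym2.map_pair_eq, Sym2.map_pair_eq]
  refine ⟨fun a => F (φ.symm a), ?_, ?_, ?_, ?_⟩
  · exact hFinj.comp φ.symm.injective
  · intro a b hab
    refine hFadj _ _ ((hφadj _ _).mpr ?_)
    rw [Equiv.apply_symm_apply, Equiv.apply_symm_apply]
    exact hab
  · intro e he e' he' hlt
    rw [hmap3, hmap3]
    refine hFord _ (hmem' e he) _ (hmem' e' he') ?_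
    have h1 := hφord _ (hmem' e he) _ (hmem' e' he')
    rw [hmap2, hmap2] at h1
    exact h1.mpr hlt
  · intro a
    have h1 := hφside (φ.symm a)
    rw [Equiv.apply_symm_apply] at h1
    rw [hFside (φ.symm a), ← h1]
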